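/- For every positive integer n, $B_{n,\lambda}^{(s)}(x,y) = \sum_{k=1}^{n} \sum_{m=0}^{\lfloor (k-1)/2\rfloor} \binom{n}{k} B_{n-k,\lambda}(x)\,(-1)^m y^{2m+1} \lambda^{k-2m-1} S_1(k,2m+1)$, and moreover $B_{0,\lambda}^{(s)}(x,y)=0$. -/

import Mathlib

open PowerSeries Finset Complex

/-- The degenerate falling factorial `(x)_{n,λ} = x(x-λ)⋯(x-(n-1)λ)`. -/
noncomputable def dff (l x : ℂ) (n : ℕ) : ℂ := ∏ j ∈ Finset.range n, (x - j * l)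

/-- Exponential generating function of a sequence: `Σ f n * t^n / n!`. -/
noncomputable def egf (f : ℕ → ℂ) : PowerSeries ℂ := PowerSeries.mk fun n => f n / n.factorial

/-- The degenerate exponential `e_λ^x(t) = (1+λt)^{x/λ} = Σ (x)_{n,λ} t^n/n!` as a power series. -/
noncomputable def degExp (l x : ℂ) : PowerSeries ℂ := egf (dff l x)

/-- The degenerate cosine `cos_λ^{(y)}(t) = cos((y/λ) log(1+λt)) = (e_λ^{iy}(t)+e_λ^{-iy}(t))/2`. -/
noncomputable def degCos (l y : ℂ) : PowerSeries ℂ :=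
  PowerSeries.C (R := ℂ) (1/2) * (degExp l (Complex.I * y) + degExp l (-(Complex.I * y)))

/-- The degenerate sine `sin_λ^{(y)}(t) = sin((y/λ) log(1+λt)) = (e_λ^{iy}(t)-e_λ^{-iy}(t))/(2i)`. -/
noncomputable def degSin (l y : ℂ) : PowerSeries ℂ :=
  PowerSeries.C (R := ℂ) (1/(2*Complex.I)) * (degExp l (Complex.I * y) - degExp l (-(Complex.I * y)))

/-- The exponential series `e^{at} = Σ a^n t^n/n!`. -/
noncomputable def expS (a : ℂ) : PowerSeries ℂ := egf (fun n => a ^ n)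

/-- The series of `log(1+t)`. -/
noncomputable def logS : PowerSeries ℂ := PowerSeries.mk fun n => if n = 0 then 0 else (-1)^(n+1) / n

/-!
Dividing `hBs` by `hB` gives `egf Bs = sin_λ^{(y)}(t) · egf B`, so `Bs` is the binomial
convolution of `B` with the coefficients `((iy)_{k,λ} - (-iy)_{k,λ}) / 2i` of the degenerate sine.
Expanding `(z)_{k,λ} = Σ_j S1(k,j) z^j λ^{k-j}` makes the even powers of `iy` cancel. That expansion
follows from the recurrence `S1(k+1,j+1) = S1(k,j) - k S1(k,j+1)`, which is read off from
`(1+t) d/dt log(1+t)^{j+1} = (j+1) log(1+t)^j`.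
-/

lemma coeff_egf (f : ℕ → ℂ) (n : ℕ) : coeff n (egf f) = f n / n.factorial := by
  simp [egf]

lemma egf_injective : Function.Injective egf := fun f g h => funext fun n => by
  simpa [coeff_egf, Nat.factorial_ne_zero] using congrArg (coeff n) h

lemma egf_mul (f g : ℕ → ℂ) :
    egf f * egf g = egf fun n => ∑ k ∈ range (n + 1), (n.choose k : ℂ) * f k * g (n - k) := by
  ext n
  rw [coeff_mul, Nat.sum_antidiagonal_eq_sum_range_succ_mk, coeff_egf, sum_div]
  refine sum_congr rfl fun k hk => ?_
  rw [coeff_egf, coeff_egf, Nat.cast_choose ℂ (Nat.lt_succ_iff.mp (mem_range.mp hk))]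
  have := Nat.factorial_ne_zero n
  field_simp

lemma one_add_X_mul_derivative_egf (f : ℕ → ℂ) :
    (1 + X) * d⁄dX ℂ (egf f) = egf fun n => f (n + 1) + n * f n := by
  ext n
  rw [add_mul, one_mul, map_add, coeff_derivative, coeff_egf, coeff_egf]
  rcases n with _ | n
  · simp
  · rw [coeff_succ_X_mul, coeff_derivative, coeff_egf, Nat.factorial_succ, Nat.factorial_succ]
    have := Nat.factorial_ne_zero n
    have : (n : ℂ) + 1 + 1 ≠ 0 := by norm_cast
    push_cast
    field_simp

lemma one_add_X_mul_derivative_logS : (1 + X) * d⁄dX ℂ logS = 1 := by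
  ext n
  rw [add_mul, one_mul, map_add, coeff_derivative]
  rcases n with _ | n
  · simp [logS]
  · rw [coeff_succ_X_mul, coeff_derivative, coeff_one, if_neg n.succ_ne_zero]
    simp only [logS, coeff_mk, if_neg n.succ_ne_zero, if_neg (n + 1).succ_ne_zero]
    have := Nat.cast_add_one_ne_zero (R := ℂ) n
    have := Nat.cast_add_one_ne_zero (R := ℂ) (n + 1)
    push_cast at *
    field_simp
    ring

lemma one_add_X_mul_derivative_logS_pow (j : ℕ) :
    (1 + X) * d⁄dX ℂ (logS ^ (j + 1)) = C ((j : ℂ) + 1) * logS ^ j := by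
  rw [derivative_pow, Nat.add_sub_cancel, map_add, map_natCast, map_one]
  push_cast
  linear_combination ((j + 1 : ℂ⟦X⟧) * logS ^ j) * one_add_X_mul_derivative_logS

lemma sum_range_eq_sum_odd {M : Type*} [AddCommMonoid M] (f : ℕ → M) (hf : ∀ m, f (2 * m) = 0)
    (N : ℕ) : ∑ j ∈ range N, f j = ∑ m ∈ range (N / 2), f (2 * m + 1) := by
  induction N with
  | zero => simp
  | succ N ih =>
    rw [sum_range_succ, ih]
    rcases Nat.even_or_odd' N with ⟨m, rfl | rfl⟩
    · rw [hf, add_zero, show (2 * m + 1) / 2 = 2 * m / 2 by omega]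
    · rw [show (2 * m + 1 + 1) / 2 = (2 * m + 1) / 2 + 1 by omega, sum_range_succ,
        show (2 * m + 1) / 2 = m by omega]

noncomputable def degSinCoeff (l w : ℂ) (k : ℕ) : ℂ :=
  (dff l (I * w) k - dff l (-(I * w)) k) / (2 * I)

lemma degSin_eq_egf (l w : ℂ) : degSin l w = egf (degSinCoeff l w) := by
  ext k
  simp only [degSin, degExp, degSinCoeff, coeff_C_mul, map_sub, coeff_egf]
  ring

lemma degExp_half_sub_degExp_neg_half_ne_zero (l : ℂ) :
    degExp l (1 / 2) - degExp l (-(1 / 2)) ≠ 0 := by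
  intro h
  have := congrArg (coeff 1) h
  simp [degExp, coeff_egf, dff] at this

section Stirling

variable {S1 : ℕ → ℕ → ℂ}
  (hS1 : ∀ j, logS ^ j = C (Nat.factorial j : ℂ) * egf (fun k => S1 k j))
include hS1

lemma stirling_zero_right (k : ℕ) : S1 k 0 = if k = 0 then 1 else 0 := by
  have := congrArg (coeff k) (hS1 0)
  rw [pow_zero, coeff_one, Nat.factorial_zero, Nat.cast_one, map_one, one_mul, coeff_egf] at this
  split_ifs at this ⊢ with hk
  · simpa [hk] using this.symm
  · simpa [Nat.factorial_ne_zero] using this.symm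

lemma stirling_eq_zero_of_lt {k j : ℕ} (h : k < j) : S1 k j = 0 := by
  have hX : X ^ j ∣ logS ^ j := pow_dvd_pow_of_dvd (X_dvd_iff.mpr (by simp [logS])) j
  have := congrArg (coeff k) (hS1 j)
  rw [X_pow_dvd_iff.mp hX k h, coeff_C_mul, coeff_egf] at this
  simpa [Nat.factorial_ne_zero] using this.symm

lemma stirling_succ_succ (k j : ℕ) : S1 (k + 1) (j + 1) = S1 k j - k * S1 k (j + 1) := by
  have h := one_add_X_mul_derivative_logS_pow j
  rw [hS1, hS1, Derivation.leibniz, derivative_C, smul_zero, add_zero, smul_eq_mul,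
    mul_left_comm, one_add_X_mul_derivative_egf, ← mul_assoc, ← map_mul, ← Nat.cast_succ,
    ← Nat.cast_mul, ← Nat.factorial_succ] at h
  have hC : C ((j + 1).factorial : ℂ) ≠ 0 :=
    (map_ne_zero_iff _ C_injective).mpr (Nat.cast_ne_zero.mpr (Nat.factorial_ne_zero _))
  linear_combination congrFun (egf_injective (mul_left_cancel₀ hC h)) k

lemma dff_eq_sum_antidiagonal (l z : ℂ) (k : ℕ) :
    dff l z k = ∑ p ∈ antidiagonal k, S1 k p.2 * z ^ p.2 * l ^ p.1 := by
  induction k with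
  | zero => simp [dff, stirling_zero_right hS1]
  | succ k ih =>
    set F : ℕ × ℕ → ℂ := fun p => S1 k p.2 * z ^ p.2 * l ^ p.1
    have hlow :
        ∑ p ∈ antidiagonal k, F (p.1, p.2 + 1) = l * dff l z k - S1 k 0 * l ^ (k + 1) := by
      have h := (Nat.sum_antidiagonal_succ (n := k) (f := F)).symm.trans Nat.sum_antidiagonal_succ'
      have hl : l * dff l z k = ∑ p ∈ antidiagonal k, F (p.1 + 1, p.2) := by
        rw [ih, mul_sum]
        exact sum_congr rfl fun p _ => by simp only [F, pow_succ]; ring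
      simp only [F, stirling_eq_zero_of_lt hS1 k.lt_succ_self] at h hl
      linear_combination -h - hl
    have hk : (k : ℂ) * S1 k 0 = 0 := by
      rcases k with _ | k <;> simp [stirling_zero_right hS1]
    have hz : z * dff l z k = ∑ p ∈ antidiagonal k, S1 k p.2 * z ^ (p.2 + 1) * l ^ p.1 := by
      rw [ih, mul_sum]
      exact sum_congr rfl fun p _ => by rw [pow_succ]; ring
    rw [Nat.sum_antidiagonal_succ', stirling_zero_right hS1, if_neg k.succ_ne_zero, zero_mul,
      zero_mul, zero_add]
    calc dff l z (k + 1)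
        = z * dff l z k - k * (l * dff l z k - S1 k 0 * l ^ (k + 1))
            - k * S1 k 0 * l ^ (k + 1) := by
          rw [dff, prod_range_succ, ← dff]; ring
      _ = _ := by
          rw [hk, zero_mul, sub_zero, ← hlow, hz, mul_sum, ← sum_sub_distrib]
          exact sum_congr rfl fun p _ => by simp only [F, stirling_succ_succ hS1]; ring

lemma dff_eq_sum_range (l z : ℂ) (k : ℕ) :
    dff l z k = ∑ j ∈ range (k + 1), S1 k j * z ^ j * l ^ (k - j) := by
  rw [dff_eq_sum_antidiagonal hS1, ← Nat.sum_antidiagonal_swap]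
  exact Nat.sum_antidiagonal_eq_sum_range_succ (fun j i => S1 k j * z ^ j * l ^ i) k

lemma degSinCoeff_eq_sum (l w : ℂ) (k : ℕ) :
    degSinCoeff l w k =
      ∑ m ∈ range ((k + 1) / 2),
        (-1) ^ m * w ^ (2 * m + 1) * l ^ (k - (2 * m + 1)) * S1 k (2 * m + 1) := by
  rw [degSinCoeff, dff_eq_sum_range hS1, dff_eq_sum_range hS1, ← sum_sub_distrib, sum_div,
    sum_range_eq_sum_odd _ (fun m => by rw [(even_two_mul m).neg_pow, sub_self, zero_div])]
  refine sum_congr rfl fun m _ => ?_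
  have hI : (I * w) ^ (2 * m + 1) = I * (-1) ^ m * w ^ (2 * m + 1) := by
    rw [mul_pow, pow_succ, pow_mul, I_sq]; ring
  rw [(odd_two_mul_add_one m).neg_pow, hI]
  field_simp
  ring

end Stirling

theorem stmt4 (lam x y : ℝ) (B Bs : ℕ → ℂ) (S1 : ℕ → ℕ → ℂ)
    (hB : egf B * (degExp lam (1/2) - degExp lam (-(1/2))) = PowerSeries.X * degExp lam x)
    (hBs : egf Bs * (degExp lam (1/2) - degExp lam (-(1/2))) =
      PowerSeries.X * degExp lam x * degSin lam y)
    (hS1 : ∀ j, logS ^ j = PowerSeries.C (R := ℂ) (Nat.factorial j) * egf (fun k => S1 k j)) :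
    Bs 0 = 0 ∧ ∀ n : ℕ, 0 < n →
      Bs n = ∑ k ∈ Finset.Icc 1 n, ∑ m ∈ Finset.range ((k-1)/2+1),
        (n.choose k : ℂ) * B (n-k) * (-1)^m * (y:ℂ)^(2*m+1) * (lam:ℂ)^(k-2*m-1) *
          S1 k (2*m+1) := by
  have hegf : egf Bs = degSin lam y * egf B :=
    mul_right_cancel₀ (degExp_half_sub_degExp_neg_half_ne_zero lam) (by rw [hBs, ← hB]; ring)
  rw [degSin_eq_egf, egf_mul] at hegf
  have hBs_eq := congrFun (egf_injective hegf)
  refine ⟨by simp [hBs_eq, degSinCoeff_eq_sum hS1], fun n _ => ?_⟩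
  rw [hBs_eq, range_eq_Ico, sum_eq_sum_Ico_succ_bot (Nat.add_one_pos n), zero_add,
    Ico_add_one_right_eq_Icc, degSinCoeff_eq_sum hS1, sum_range_zero, mul_zero, zero_mul, zero_add]
  refine sum_congr rfl fun k hk => ?_
  rw [degSinCoeff_eq_sum hS1, show (k + 1) / 2 = (k - 1) / 2 + 1 by grind, mul_sum, sum_mul]
  refine sum_congr rfl fun m _ => ?_
  rw [Nat.sub_sub]
  ring
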